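/- Two subgroups G, H ≤ Aut(T) satisfy G^(k) = H^(k) if and only if: for each g ∈ G and each vertex v there exists h ∈ H with (h⁻¹g) restricted to B(v,k) lying in the restriction of stab_H(v) to B(v,k), and symmetrically for each h ∈ H and each vertex v there exists g ∈ G with (g⁻¹h)|_{B(v,k)} ∈ stab_G(v)|_{B(v,k)}. -/

import Mathlib

open SimpleGraph Set

variable {V : Type*}

/-- The ball of radius `k` about the vertex `v`, with respect to the path metric. -/
def ball (T : SimpleGraph V) (v : V) (k : ℕ) : Set V := {u | T.dist v u ≤ k}

/-- `g` fixes the vertex set `S` pointwise. -/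
def Fixes {T : SimpleGraph V} (g : T ≃g T) (S : Set V) : Prop := ∀ u ∈ S, g u = u

/-- The `k`-closure of a set `S` of automorphisms of `T`: all automorphisms that agree
with some element of `S` on every ball of radius `k`. -/
def kClosure (T : SimpleGraph V) (S : Set (T ≃g T)) (k : ℕ) : Set (T ≃g T) :=
  {x | ∀ v : V, ∃ g ∈ S, ∀ u ∈ _root_.ball T v k, g u = x u}

/-- A (non-empty) subtree of a tree, viewed as a geodesically convex set of vertices. -/
def IsSubtree (T : SimpleGraph V) (Y : Set V) : Prop :=
  Y.Nonempty ∧ ∀ u ∈ Y, ∀ v ∈ Y, ∀ w : V, T.dist u w + T.dist w v = T.dist u v → w ∈ Y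

/-- `G` stabilises the vertex set `Y` (setwise). -/
def Stabilizes {T : SimpleGraph V} (S : Set (T ≃g T)) (Y : Set V) : Prop :=
  ∀ g ∈ S, (fun u => g u) '' Y = Y

/-- The semi-tree `T_{(v,w)}`: the component of `w` after removing the edge pair
`{(v,w),(w,v)}`, i.e. the vertices strictly closer to `w` than to `v`. -/
def semiTree (T : SimpleGraph V) (v w : V) : Set V := {u | T.dist w u < T.dist v u}

/-- The permutation topology on `Aut(T)`: pointwise convergence on vertices. -/
instance autTopology (T : SimpleGraph V) : TopologicalSpace (T ≃g T) :=
  TopologicalSpace.induced (fun g => (g : V → V))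
    (@Pi.topologicalSpace V (fun _ => V) (fun _ => ⊥))

/-!
The `k`-closure is a closure operator on sets of automorphisms (extensive, monotone and
idempotent), so `G^(k) = H^(k)` exactly when `G ⊆ H^(k)` and `H ⊆ G^(k)`. For a subgroup `H`,
membership in `H^(k)` is the local condition of the theorem.
-/

section kClosure

variable {T : SimpleGraph V} {k : ℕ}

theorem subset_kClosure (S : Set (T ≃g T)) : S ⊆ kClosure T S k :=
  fun g hg _ => ⟨g, hg, fun _ _ => rfl⟩

theorem kClosure_mono {S S' : Set (T ≃g T)} (hS : S ⊆ S') : kClosure T S k ⊆ kClosure T S' k :=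
  fun _ hx v => (hx v).imp fun _ ⟨hg, hgx⟩ => ⟨hS hg, hgx⟩

theorem kClosure_kClosure (S : Set (T ≃g T)) : kClosure T (kClosure T S k) k = kClosure T S k := by
  refine (subset_kClosure _).antisymm' fun x hx v => ?_
  obtain ⟨y, hy, hyx⟩ := hx v
  obtain ⟨g, hg, hgy⟩ := hy v
  exact ⟨g, hg, fun u hu => (hgy u hu).trans (hyx u hu)⟩

theorem kClosure_subset_kClosure_iff {S S' : Set (T ≃g T)} :
    kClosure T S k ⊆ kClosure T S' k ↔ S ⊆ kClosure T S' k :=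
  ⟨(subset_kClosure S).trans, fun h => kClosure_kClosure S' ▸ kClosure_mono h⟩

theorem kClosure_eq_kClosure_iff {S S' : Set (T ≃g T)} :
    kClosure T S k = kClosure T S' k ↔ S ⊆ kClosure T S' k ∧ S' ⊆ kClosure T S k := by
  rw [subset_antisymm_iff, kClosure_subset_kClosure_iff, kClosure_subset_kClosure_iff]

/-- Forwards take `h' = 1`; backwards the stabiliser factor `h'` is absorbed into `h * h' ∈ H`. -/
theorem mem_kClosure_subgroup_iff (H : Subgroup (T ≃g T)) (g : T ≃g T) :
    g ∈ kClosure T (H : Set (T ≃g T)) k ↔ ∀ v : V, ∃ h ∈ H, ∃ h' ∈ H, h' v = v ∧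
      ∀ u ∈ _root_.ball T v k, (h⁻¹ * g) u = h' u := by
  refine ⟨fun hg v => ?_, fun hg v => ?_⟩
  · obtain ⟨h, hh, hhg⟩ := hg v
    refine ⟨h, hh, 1, H.one_mem, rfl, fun u hu => ?_⟩
    rw [RelIso.mul_apply, ← hhg u hu, RelIso.inv_apply_self, RelIso.one_apply]
  · obtain ⟨h, hh, h', hh', -, hhg⟩ := hg v
    refine ⟨h * h', H.mul_mem hh hh', fun u hu => ?_⟩
    rw [RelIso.mul_apply, ← hhg u hu, RelIso.mul_apply, RelIso.apply_inv_self]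

end kClosure

theorem kClosure_eq_iff_general (T : SimpleGraph V)
    (G H : Subgroup (T ≃g T)) (k : ℕ) :
    kClosure T (G : Set (T ≃g T)) k = kClosure T (H : Set (T ≃g T)) k ↔
      ((∀ g ∈ G, ∀ v : V, ∃ h ∈ H, ∃ h' ∈ H, h' v = v ∧
          ∀ u ∈ _root_.ball T v k, (h⁻¹ * g) u = h' u) ∧
        (∀ h ∈ H, ∀ v : V, ∃ g ∈ G, ∃ g' ∈ G, g' v = v ∧
          ∀ u ∈ _root_.ball T v k, (g⁻¹ * h) u = g' u)) := by
  simp only [kClosure_eq_kClosure_iff, Set.subset_def, SetLike.mem_coe, mem_kClosure_subgroup_iff]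

/-- criterion for two groups to have the same `k`-closure. -/
theorem kClosure_eq_iff (T : SimpleGraph V) (hT : T.IsTree)
    (hlf : ∀ v : V, (T.neighborSet v).Finite)
    (G H : Subgroup (T ≃g T)) (k : ℕ) :
    kClosure T (G : Set (T ≃g T)) k = kClosure T (H : Set (T ≃g T)) k ↔
      ((∀ g ∈ G, ∀ v : V, ∃ h ∈ H, ∃ h' ∈ H, h' v = v ∧
          ∀ u ∈ _root_.ball T v k, (h⁻¹ * g) u = h' u) ∧
        (∀ h ∈ H, ∀ v : V, ∃ g ∈ G, ∃ g' ∈ G, g' v = v ∧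
          ∀ u ∈ _root_.ball T v k, (g⁻¹ * h) u = g' u)) :=
  kClosure_eq_iff_general T G H k
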